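/- Completeness of the optimized translation relative to the simple one: for any canonical LF context Γ and canonical LF type A (not necessarily well-formed), if the sequent Σ; ⟦Γ⟧ ⟶ ⟦A⟧ M is derivable in hohh, then Σ; ⦇Γ⦈ ⟶ ⦃A⦄ M is derivable, where the optimized derivation is obtained by replacing each subderivation for an elided rigid-variable typing premise by the axiom ⊤R. -/

import Mathlib

namespace LFHH

/-! ## Simple types and hohh terms -/

inductive STy : Type
  | lfobj | lftype | o
  | arrow (a b : STy)
deriving DecidableEq

/-- hohh terms: de Bruijn bound variables, named constants. -/
inductive HTerm : Type
  | bvar (n : ℕ)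
  | con (c : ℕ)
  | lam (τ : STy) (t : HTerm)
  | app (t u : HTerm)
deriving DecidableEq

def hshift (d c : ℕ) : HTerm → HTerm
  | .bvar n => if n < c then .bvar n else .bvar (n + d)
  | .con k => .con k
  | .lam τ t => .lam τ (hshift d (c+1) t)
  | .app t u => .app (hshift d c t) (hshift d c u)

/-- substitute `s` for de Bruijn index `k` (standard, with lowering). -/
def hsubst (k : ℕ) (s : HTerm) : HTerm → HTerm
  | .bvar n => if n = k then hshift k 0 s else if k < n then .bvar (n-1) else .bvar n
  | .con c => .con c
  | .lam τ t => .lam τ (hsubst (k+1) s t)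
  | .app t u => .app (hsubst k s t) (hsubst k s u)

/-- substitute `s` for the constant `c`. -/
def hsubstCon (c : ℕ) (s : HTerm) : HTerm → HTerm
  | .bvar n => .bvar n
  | .con k => if k = c then s else .con k
  | .lam τ t => .lam τ (hsubstCon c s t)
  | .app t u => .app (hsubstCon c s t) (hsubstCon c s u)

/-- simultaneous substitution of terms for constants. -/
def hsubstSim (σ : ℕ → Option HTerm) : HTerm → HTerm
  | .bvar n => .bvar n
  | .con k => (σ k).getD (.con k)
  | .lam τ t => .lam τ (hsubstSim σ t)
  | .app t u => .app (hsubstSim σ t) (hsubstSim σ u)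

/-- constants occurring in a term. -/
def hcons : HTerm → List ℕ
  | .bvar _ => []
  | .con c => [c]
  | .lam _ t => hcons t
  | .app t u => hcons t ++ hcons u

/-- beta reduction step. -/
inductive HStepB : HTerm → HTerm → Prop
  | beta (τ : STy) (t u : HTerm) : HStepB (.app (.lam τ t) u) (hsubst 0 u t)
  | lam (τ : STy) {t t'} : HStepB t t' → HStepB (.lam τ t) (.lam τ t')
  | appl {t t'} (u) : HStepB t t' → HStepB (.app t u) (.app t' u)
  | appr (t) {u u'} : HStepB u u' → HStepB (.app t u) (.app t u')

/-- beta or eta reduction step. -/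
inductive HStep : HTerm → HTerm → Prop
  | beta (τ : STy) (t u : HTerm) : HStep (.app (.lam τ t) u) (hsubst 0 u t)
  | eta (τ : STy) (t : HTerm) : HStep (.lam τ (.app (hshift 1 0 t) (.bvar 0))) t
  | lam (τ : STy) {t t'} : HStep t t' → HStep (.lam τ t) (.lam τ t')
  | appl {t t'} (u) : HStep t t' → HStep (.app t u) (.app t' u)
  | appr (t) {u u'} : HStep t u' → HStep (.app t u) (.app t u')

def HNormal (t : HTerm) : Prop := ∀ u, ¬ HStep t u
def HNormalB (t : HTerm) : Prop := ∀ u, ¬ HStepB t u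

/-- `t` beta-normalizes to `t'`. -/
def HBNF (t t' : HTerm) : Prop := Relation.ReflTransGen HStepB t t' ∧ HNormalB t'

/-! ## hohh formulas -/

inductive HForm : Type
  | top
  | hastype (m a : HTerm)
  | papp (u : ℕ) (args : List HTerm)
  | imp (f g : HForm)
  | all (τ : STy) (f : HForm)
deriving DecidableEq

def substF (k : ℕ) (s : HTerm) : HForm → HForm
  | .top => .top
  | .hastype m a => .hastype (hsubst k s m) (hsubst k s a)
  | .papp u args => .papp u (args.map (hsubst k s))
  | .imp f g => .imp (substF k s f) (substF k s g)
  | .all τ f => .all τ (substF (k+1) s f)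

def closeT (k x : ℕ) : HTerm → HTerm
  | .bvar n => .bvar n
  | .con c => if c = x then .bvar k else .con c
  | .lam τ t => .lam τ (closeT (k+1) x t)
  | .app t u => .app (closeT k x t) (closeT k x u)

def closeF (k x : ℕ) : HForm → HForm
  | .top => .top
  | .hastype m a => .hastype (closeT k x m) (closeT k x a)
  | .papp u args => .papp u (args.map (closeT k x))
  | .imp f g => .imp (closeF k x f) (closeF k x g)
  | .all τ f => .all τ (closeF (k+1) x f)

def IsAtom : HForm → Prop
  | .hastype _ _ => True
  | .papp _ _ => True
  | _ => False

mutual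
  def IsG : HForm → Prop
    | .top => True
    | .hastype _ _ => True
    | .papp _ _ => True
    | .imp d g => IsD d ∧ IsG g
    | .all _ g => IsG g
  def IsD : HForm → Prop
    | .top => False
    | .hastype _ _ => True
    | .papp _ _ => True
    | .imp g d => IsG g ∧ IsD d
    | .all _ d => IsD d
end

/-! ## hohh typing and sequent calculus -/

abbrev Sig := List (ℕ × STy)

def sigNames (Sg : Sig) : List ℕ := Sg.map Prod.fst

inductive HWt : Sig → List STy → HTerm → STy → Prop
  | bvar {Sg env n τ} : env[n]? = some τ → HWt Sg env (.bvar n) τ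
  | con {Sg env c τ} : (c, τ) ∈ Sg → HWt Sg env (.con c) τ
  | lam {Sg env τ σ t} : HWt Sg (τ :: env) t σ → HWt Sg env (.lam τ t) (.arrow τ σ)
  | app {Sg env τ σ t u} : HWt Sg env t (.arrow τ σ) → HWt Sg env u τ →
      HWt Sg env (.app t u) σ

/-! Height-indexed sequent calculus for the hohh fragment. -/
mutual
  inductive Seq : ℕ → Sig → List HForm → HForm → Prop
    | top {n Sg Γ} : Seq n Sg Γ .top
    | impR {n Sg Γ d g} : Seq n Sg (d :: Γ) g → Seq (n+1) Sg Γ (.imp d g)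
    | allR {n Sg Γ τ g} (c : ℕ) : c ∉ sigNames Sg →
        Seq n ((c, τ) :: Sg) Γ (substF 0 (.con c) g) → Seq (n+1) Sg Γ (.all τ g)
    | decide {n Sg Γ a d} : d ∈ Γ → IsAtom a → Focus n Sg Γ a d → Seq (n+1) Sg Γ a
  inductive Focus : ℕ → Sig → List HForm → HForm → HForm → Prop
    | init {n Sg Γ a} : IsAtom a → Focus n Sg Γ a a
    | allL {n Sg Γ a τ d} (t : HTerm) : HWt Sg [] t τ →
        Focus n Sg Γ a (substF 0 t d) → Focus (n+1) Sg Γ a (.all τ d)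
    | impL {n Sg Γ a g d} : Seq n Sg Γ g → Focus n Sg Γ a d →
        Focus (n+1) Sg Γ a (.imp g d)
end

/-- derivability (some height). -/
def SeqD (Sg : Sig) (Γ : List HForm) (g : HForm) : Prop := ∃ n, Seq n Sg Γ g

/-- clause ∀x1.(F1 ⊃ ... ∀xn.(Fn ⊃ A')...). -/
def mkClause : List (STy × HForm) → HForm → HForm
  | [], a => a
  | (τ, f) :: L, a => .all τ (.imp f (mkClause L a))

/-- peel a clause along a list of instantiating terms, returning
the instantiated bodies and head. -/
def peel : List HTerm → HForm → Option (List HForm × HForm)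
  | [], f => some ([], f)
  | t :: ts, .all _ (.imp g d) =>
      (peel ts (substF 0 t d)).map (fun p => ((substF 0 t g) :: p.1, p.2))
  | _ :: _, _ => none

/-! ## LF syntax -/

mutual
  inductive LFKind : Type
    | type
    | pi (A : LFType) (K : LFKind)
  inductive LFType : Type
    | tvar (u : ℕ)
    | pi (A : LFType) (B : LFType)
    | lam (A : LFType) (B : LFType)
    | app (A : LFType) (M : LFObj)
  inductive LFObj : Type
    | bvar (n : ℕ)
    | fvar (x : ℕ)
    | lam (A : LFType) (M : LFObj)
    | app (M N : LFObj)
end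

/-! open: instantiate bound variable `k` with object `N` (locally nameless style). -/
mutual
  def openK (k : ℕ) (N : LFObj) : LFKind → LFKind
    | .type => .type
    | .pi A K => .pi (openT k N A) (openK (k+1) N K)
  def openT (k : ℕ) (N : LFObj) : LFType → LFType
    | .tvar u => .tvar u
    | .pi A B => .pi (openT k N A) (openT (k+1) N B)
    | .lam A B => .lam (openT k N A) (openT (k+1) N B)
    | .app A M => .app (openT k N A) (openO k N M)
  def openO (k : ℕ) (N : LFObj) : LFObj → LFObj
    | .bvar n => if n = k then N else .bvar n
    | .fvar x => .fvar x
    | .lam A M => .lam (openT k N A) (openO (k+1) N M)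
    | .app M M' => .app (openO k N M) (openO k N M')
end

/-! substitute object `N` for the free (named) variable `x`. -/
mutual
  def substK (x : ℕ) (N : LFObj) : LFKind → LFKind
    | .type => .type
    | .pi A K => .pi (substT x N A) (substK x N K)
  def substT (x : ℕ) (N : LFObj) : LFType → LFType
    | .tvar u => .tvar u
    | .pi A B => .pi (substT x N A) (substT x N B)
    | .lam A B => .lam (substT x N A) (substT x N B)
    | .app A M => .app (substT x N A) (substO x N M)
  def substO (x : ℕ) (N : LFObj) : LFObj → LFObj
    | .bvar n => .bvar n
    | .fvar y => if y = x then N else .fvar y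
    | .lam A M => .lam (substT x N A) (substO x N M)
    | .app M M' => .app (substO x N M) (substO x N M')
end

/-! simultaneous substitution of objects for free variables. -/
mutual
  def substSimK (σ : ℕ → Option LFObj) : LFKind → LFKind
    | .type => .type
    | .pi A K => .pi (substSimT σ A) (substSimK σ K)
  def substSimT (σ : ℕ → Option LFObj) : LFType → LFType
    | .tvar u => .tvar u
    | .pi A B => .pi (substSimT σ A) (substSimT σ B)
    | .lam A B => .lam (substSimT σ A) (substSimT σ B)
    | .app A M => .app (substSimT σ A) (substSimO σ M)
  def substSimO (σ : ℕ → Option LFObj) : LFObj → LFObj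
    | .bvar n => .bvar n
    | .fvar y => (σ y).getD (.fvar y)
    | .lam A M => .lam (substSimT σ A) (substSimO σ M)
    | .app M M' => .app (substSimO σ M) (substSimO σ M')
end

/-! rename free variable `x` (object-level and type-level) to `y`. -/
mutual
  def renameK (x y : ℕ) : LFKind → LFKind
    | .type => .type
    | .pi A K => .pi (renameT x y A) (renameK x y K)
  def renameT (x y : ℕ) : LFType → LFType
    | .tvar u => .tvar (if u = x then y else u)
    | .pi A B => .pi (renameT x y A) (renameT x y B)
    | .lam A B => .lam (renameT x y A) (renameT x y B)
    | .app A M => .app (renameT x y A) (renameO x y M)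
  def renameO (x y : ℕ) : LFObj → LFObj
    | .bvar n => .bvar n
    | .fvar z => .fvar (if z = x then y else z)
    | .lam A M => .lam (renameT x y A) (renameO x y M)
    | .app M M' => .app (renameO x y M) (renameO x y M')
end

/-! free names occurring in LF expressions (both object- and type-level names). -/
mutual
  def namesK : LFKind → List ℕ
    | .type => []
    | .pi A K => namesT A ++ namesK K
  def namesT : LFType → List ℕ
    | .tvar u => [u]
    | .pi A B => namesT A ++ namesT B
    | .lam A B => namesT A ++ namesT B
    | .app A M => namesT A ++ namesO M
  def namesO : LFObj → List ℕ
    | .bvar _ => []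
    | .fvar x => [x]
    | .lam A M => namesT A ++ namesO M
    | .app M M' => namesO M ++ namesO M'
end

/-! local closedness: all bound-variable indices below `k`. -/
mutual
  def closedK (k : ℕ) : LFKind → Prop
    | .type => True
    | .pi A K => closedT k A ∧ closedK (k+1) K
  def closedT (k : ℕ) : LFType → Prop
    | .tvar _ => True
    | .pi A B => closedT k A ∧ closedT (k+1) B
    | .lam A B => closedT k A ∧ closedT (k+1) B
    | .app A M => closedT k A ∧ closedO k M
  def closedO (k : ℕ) : LFObj → Prop
    | .bvar n => n < k
    | .fvar _ => True
    | .lam A M => closedT k A ∧ closedO (k+1) M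
    | .app M M' => closedO k M ∧ closedO k M'
end

def LC (M : LFObj) : Prop := closedO 0 M

/-! ## LF beta reduction and normal forms -/

mutual
  inductive StepK : LFKind → LFKind → Prop
    | pi1 {A A' K} : StepT A A' → StepK (.pi A K) (.pi A' K)
    | pi2 {A K K'} : StepK K K' → StepK (.pi A K) (.pi A K')
  inductive StepT : LFType → LFType → Prop
    | beta {A B N} : StepT (.app (.lam A B) N) (openT 0 N B)
    | pi1 {A A' B} : StepT A A' → StepT (.pi A B) (.pi A' B)
    | pi2 {A B B'} : StepT B B' → StepT (.pi A B) (.pi A B')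
    | lam1 {A A' B} : StepT A A' → StepT (.lam A B) (.lam A' B)
    | lam2 {A B B'} : StepT B B' → StepT (.lam A B) (.lam A B')
    | app1 {A A' M} : StepT A A' → StepT (.app A M) (.app A' M)
    | app2 {A M M'} : StepO M M' → StepT (.app A M) (.app A M')
  inductive StepO : LFObj → LFObj → Prop
    | beta {A M N} : StepO (.app (.lam A M) N) (openO 0 N M)
    | lam1 {A A' M} : StepT A A' → StepO (.lam A M) (.lam A' M)
    | lam2 {A M M'} : StepO M M' → StepO (.lam A M) (.lam A M')
    | app1 {M M' N} : StepO M M' → StepO (.app M N) (.app M' N)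
    | app2 {M N N'} : StepO N N' → StepO (.app M N) (.app M N')
end

def NormK (K : LFKind) : Prop := ∀ K', ¬ StepK K K'
def NormT (A : LFType) : Prop := ∀ A', ¬ StepT A A'
def NormO (M : LFObj) : Prop := ∀ M', ¬ StepO M M'

/-- beta-normalization relations. -/
def KNF (K K' : LFKind) : Prop := Relation.ReflTransGen StepK K K' ∧ NormK K'
def TNF (A A' : LFType) : Prop := Relation.ReflTransGen StepT A A' ∧ NormT A'
def ONF (M M' : LFObj) : Prop := Relation.ReflTransGen StepO M M' ∧ NormO M'

/-! ## LF contexts, judgments, typing -/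

inductive EVal : Type
  | kind (K : LFKind)
  | type (A : LFType)

abbrev Ctx := List (ℕ × EVal)

def ctxNames (Γ : Ctx) : List ℕ := Γ.map Prod.fst

def EVNF : EVal → EVal → Prop
  | .kind K, .kind K' => KNF K K'
  | .type A, .type A' => TNF A A'
  | _, _ => False

def CtxNF (Γ Γ' : Ctx) : Prop :=
  List.Forall₂ (fun p q => p.1 = q.1 ∧ EVNF p.2 q.2) Γ Γ'

def substEV (x : ℕ) (N : LFObj) : EVal → EVal
  | .kind K => .kind (substK x N K)
  | .type A => .type (substT x N A)

def substCtx (x : ℕ) (N : LFObj) (Γ : Ctx) : Ctx :=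
  Γ.map (fun p => (p.1, substEV x N p.2))

def renameEV (x y : ℕ) : EVal → EVal
  | .kind K => .kind (renameK x y K)
  | .type A => .type (renameT x y A)

def renameCtx (x y : ℕ) (Γ : Ctx) : Ctx :=
  Γ.map (fun p => (p.1, renameEV x y p.2))

/-- LF judgments (other than context well-formedness). -/
inductive LFJudg : Type
  | kind (K : LFKind)
  | istype (A : LFType) (K : LFKind)
  | isobj (M : LFObj) (A : LFType)

def substJudg (x : ℕ) (N : LFObj) : LFJudg → LFJudg
  | .kind K => .kind (substK x N K)
  | .istype A K => .istype (substT x N A) (substK x N K)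
  | .isobj M A => .isobj (substO x N M) (substT x N A)

def renameJudg (x y : ℕ) : LFJudg → LFJudg
  | .kind K => .kind (renameK x y K)
  | .istype A K => .istype (renameT x y A) (renameK x y K)
  | .isobj M A => .isobj (renameO x y M) (renameT x y A)

def namesJudg : LFJudg → List ℕ
  | .kind K => namesK K
  | .istype A K => namesT A ++ namesK K
  | .isobj M A => namesO M ++ namesT A

def JudgNF : LFJudg → LFJudg → Prop
  | .kind K, .kind K' => KNF K K'
  | .istype A K, .istype A' K' => TNF A A' ∧ KNF K K'
  | .isobj M A, .isobj M' A' => ONF M M' ∧ TNF A A'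
  | _, _ => False

/-! The LF typing rules (Figure 2), in locally nameless style. -/
mutual
  inductive WfCtx : Ctx → Prop
    | nil : WfCtx []
    | kind {Γ K u} : WfKind Γ K → WfCtx Γ → u ∉ ctxNames Γ →
        WfCtx ((u, .kind K) :: Γ)
    | type {Γ A x} : WfType Γ A .type → WfCtx Γ → x ∉ ctxNames Γ →
        WfCtx ((x, .type A) :: Γ)
  inductive WfKind : Ctx → LFKind → Prop
    | type {Γ} : WfCtx Γ → WfKind Γ .type
    | pi {Γ A K} (x : ℕ) : WfType Γ A .type →
        x ∉ ctxNames Γ → x ∉ namesK K →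
        WfKind ((x, .type A) :: Γ) (openK 0 (.fvar x) K) →
        WfKind Γ (.pi A K)
  inductive WfType : Ctx → LFType → LFKind → Prop
    | var {Γ u K K'} : WfCtx Γ → (u, .kind K) ∈ Γ → KNF K K' →
        WfType Γ (.tvar u) K'
    | pi {Γ A B} (x : ℕ) : WfType Γ A .type →
        x ∉ ctxNames Γ → x ∉ namesT B →
        WfType ((x, .type A) :: Γ) (openT 0 (.fvar x) B) .type →
        WfType Γ (.pi A B) .type
    | lam {Γ A A' B K} (x : ℕ) : WfType Γ A .type →
        x ∉ ctxNames Γ → x ∉ namesT B → x ∉ namesK K →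
        WfType ((x, .type A) :: Γ) (openT 0 (.fvar x) B) (openK 0 (.fvar x) K) →
        TNF A A' →
        WfType Γ (.lam A B) (.pi A' K)
    | app {Γ A B K K' M} : WfType Γ A (.pi B K) → WfObj Γ M B →
        KNF (openK 0 M K) K' → WfType Γ (.app A M) K'
  inductive WfObj : Ctx → LFObj → LFType → Prop
    | var {Γ x A A'} : WfCtx Γ → (x, .type A) ∈ Γ → TNF A A' →
        WfObj Γ (.fvar x) A'
    | lam {Γ A A' B M} (x : ℕ) : WfType Γ A .type →
        x ∉ ctxNames Γ → x ∉ namesO M → x ∉ namesT B →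
        WfObj ((x, .type A) :: Γ) (openO 0 (.fvar x) M) (openT 0 (.fvar x) B) →
        TNF A A' →
        WfObj Γ (.lam A M) (.pi A' B)
    | app {Γ M N A B B'} : WfObj Γ M (.pi A B) → WfObj Γ N A →
        TNF (openT 0 N B) B' → WfObj Γ (.app M N) B'
end

def WfJudg (Γ : Ctx) : LFJudg → Prop
  | .kind K => WfKind Γ K
  | .istype A K => WfType Γ A K
  | .isobj M A => WfObj Γ M A

/-! ## Canonical forms -/

/-! Canonical (beta-normal, eta-long / fully applied) forms of LF,
presented as the standard canonical-forms type system. -/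
mutual
  inductive CanK : Ctx → LFKind → Prop
    | type {Γ} : CanK Γ .type
    | pi {Γ A K} (x : ℕ) : CanT Γ A .type →
        x ∉ ctxNames Γ → x ∉ namesK K →
        CanK ((x, .type A) :: Γ) (openK 0 (.fvar x) K) →
        CanK Γ (.pi A K)
  inductive CanT : Ctx → LFType → LFKind → Prop
    | atom {Γ A} : AtT Γ A .type → CanT Γ A .type
    | pi {Γ A B} (x : ℕ) : CanT Γ A .type →
        x ∉ ctxNames Γ → x ∉ namesT B →
        CanT ((x, .type A) :: Γ) (openT 0 (.fvar x) B) .type →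
        CanT Γ (.pi A B) .type
    | lam {Γ A B K} (x : ℕ) : CanT Γ A .type →
        x ∉ ctxNames Γ → x ∉ namesT B → x ∉ namesK K →
        CanT ((x, .type A) :: Γ) (openT 0 (.fvar x) B) (openK 0 (.fvar x) K) →
        CanT Γ (.lam A B) (.pi A K)
  inductive AtT : Ctx → LFType → LFKind → Prop
    | var {Γ u K} : (u, .kind K) ∈ Γ → AtT Γ (.tvar u) K
    | app {Γ A B K K' M} : AtT Γ A (.pi B K) → CanO Γ M B →
        KNF (openK 0 M K) K' → AtT Γ (.app A M) K'
  inductive CanO : Ctx → LFObj → LFType → Prop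
    | atom {Γ M A} : AtO Γ M A → AtT Γ A .type → CanO Γ M A
    | lam {Γ A B M} (x : ℕ) : CanT Γ A .type →
        x ∉ ctxNames Γ → x ∉ namesO M → x ∉ namesT B →
        CanO ((x, .type A) :: Γ) (openO 0 (.fvar x) M) (openT 0 (.fvar x) B) →
        CanO Γ (.lam A M) (.pi A B)
  inductive AtO : Ctx → LFObj → LFType → Prop
    | var {Γ x A} : (x, .type A) ∈ Γ → AtO Γ (.fvar x) A
    | app {Γ M N A B B'} : AtO Γ M (.pi A B) → CanO Γ N A →
        TNF (openT 0 N B) B' → AtO Γ (.app M N) B'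
end

inductive CanCtx : Ctx → Prop
  | nil : CanCtx []
  | kind {Γ K u} : CanK Γ K → CanCtx Γ → u ∉ ctxNames Γ →
      CanCtx ((u, .kind K) :: Γ)
  | type {Γ A x} : CanT Γ A .type → CanCtx Γ → x ∉ ctxNames Γ →
      CanCtx ((x, .type A) :: Γ)

def CanEV (Γ : Ctx) : EVal → Prop
  | .kind K => CanK Γ K
  | .type A => CanT Γ A .type

def CanJudg (Γ : Ctx) : LFJudg → Prop
  | .kind K => CanK Γ K
  | .istype A K => CanT Γ A K
  | .isobj M A => CanO Γ M A

/-! ## Encoding of LF into hohh -/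

/-- simple type assigned to the encoding of an object of a given LF type. -/
def phiT : LFType → STy
  | .pi A B => .arrow (phiT A) (phiT B)
  | _ => .lfobj

def phiK : LFKind → STy
  | .type => .lftype
  | .pi A K => .arrow (phiT A) (phiK K)

/-! type-erasing encoding of LF objects and (base) types into hohh terms. -/
mutual
  def encO : LFObj → HTerm
    | .bvar n => .bvar n
    | .fvar x => .con x
    | .lam A M => .lam (phiT A) (encO M)
    | .app M N => .app (encO M) (encO N)
  def encT : LFType → HTerm
    | .tvar u => .con u
    | .app A M => .app (encT A) (encO M)
    | .pi _ _ => .con 0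
    | .lam _ _ => .con 0
end

def IsBaseT : LFType → Prop
  | .tvar _ => True
  | .app A _ => IsBaseT A
  | _ => False

/-- head type-family constant of a base type. -/
def headT : LFType → ℕ
  | .tvar u => u
  | .app A _ => headT A
  | _ => 0

/-- encoded argument list of a base type. -/
def argsT : LFType → List HTerm
  | .app A M => argsT A ++ [encO M]
  | _ => []

/-- signature of constants corresponding to an LF context. -/
def sigOf (Γ : Ctx) : Sig :=
  Γ.map (fun p => (p.1, match p.2 with | .kind K => phiK K | .type A => phiT A))

/-! ## The simple translation -/

/-- ⟦A⟧ M = F : the simple translation of an LF type applied to an hohh term. -/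
inductive SimpleT : LFType → HTerm → HForm → Prop
  | base {A M} : IsBaseT A → SimpleT A M (.hastype M (encT A))
  | pi {A B M FA FB} (x : ℕ) :
      x ∉ namesT A → x ∉ namesT B → x ∉ hcons M →
      SimpleT A (.con x) FA →
      SimpleT (openT 0 (.fvar x) B) (.app M (.con x)) FB →
      SimpleT (.pi A B) M (.all (phiT A) (closeF 0 x (.imp FA FB)))

/-- translation of an LF context (specification) into a logic program;
kind assignments are dropped. -/
inductive SimpleCtx : Ctx → List HForm → Prop
  | nil : SimpleCtx [] []
  | kind {Γ Ds u K} : SimpleCtx Γ Ds → SimpleCtx ((u, .kind K) :: Γ) Ds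
  | type {Γ Ds x A F} : SimpleT A (.con x) F → SimpleCtx Γ Ds →
      SimpleCtx ((x, .type A) :: Γ) (F :: Ds)

/-! ## Rigid occurrences -/

/-- LF-level argument list of a base type. -/
def argsLF : LFType → List LFObj
  | .app A M => argsLF A ++ [M]
  | _ => []

mutual
  /-- Γ⃗; δ; x ⊢o M : x occurs rigidly in the object M. -/
  inductive RigidO : List ℕ → List ℕ → ℕ → LFObj → Prop
    | init {gs δ x} (ys : List ℕ) : ys.Nodup → (∀ y ∈ ys, y ∈ δ) →
        RigidO gs δ x ((ys.map LFObj.fvar).foldl LFObj.app (.fvar x))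
    | app {gs δ x y} (args : List LFObj) {Mi} : y ∉ gs → Mi ∈ args →
        RigidO gs δ x Mi →
        RigidO gs δ x (args.foldl LFObj.app (.fvar y))
    | abs {gs δ x A M} (y : ℕ) : y ∉ δ → y ∉ gs → y ≠ x → y ∉ namesO M →
        RigidO gs (δ ++ [y]) x (openO 0 (.fvar y) M) →
        RigidO gs δ x (.lam A M)
  /-- Γ⃗; x ⊢t A : x occurs rigidly in the type A. -/
  inductive RigidT : List ℕ → ℕ → LFType → Prop
    | app {gs x A} (Mi : LFObj) : IsBaseT A → Mi ∈ argsLF A → RigidO gs [] x Mi →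
        RigidT gs x A
    | pi {gs x A B} (y : ℕ) : y ∉ gs → y ≠ x → y ∉ namesT B →
        RigidT (gs ++ [y]) x (openT 0 (.fvar y) B) →
        RigidT gs x (.pi A B)
end

/-! ## The optimized translation -/

mutual
  /-- ⦇A⦈Γ⃗ M = F : negative (program clause) optimized translation. -/
  inductive OptN : List ℕ → LFType → HTerm → HForm → Prop
    | base {gs A M} : IsBaseT A → OptN gs A M (.papp (headT A) (M :: argsT A))
    | pi_rigid {gs A B M F} (x : ℕ) :
        x ∉ gs → x ∉ namesT A → x ∉ namesT B → x ∉ hcons M →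
        RigidT (gs ++ [x]) x (openT 0 (.fvar x) B) →
        OptN (gs ++ [x]) (openT 0 (.fvar x) B) (.app M (.con x)) F →
        OptN gs (.pi A B) M (.all (phiT A) (.imp .top (closeF 0 x F)))
    | pi_nonrigid {gs A B M FA F} (x : ℕ) :
        x ∉ gs → x ∉ namesT A → x ∉ namesT B → x ∉ hcons M →
        ¬ RigidT (gs ++ [x]) x (openT 0 (.fvar x) B) →
        OptP A (.con x) FA →
        OptN (gs ++ [x]) (openT 0 (.fvar x) B) (.app M (.con x)) F →
        OptN gs (.pi A B) M (.all (phiT A) (closeF 0 x (.imp FA F)))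
  /-- ⦃A⦄ M = F : positive (goal) optimized translation. -/
  inductive OptP : LFType → HTerm → HForm → Prop
    | base {A M} : IsBaseT A → OptP A M (.papp (headT A) (M :: argsT A))
    | pi {A B M FA F} (x : ℕ) :
        x ∉ namesT A → x ∉ namesT B → x ∉ hcons M →
        OptN [] A (.con x) FA →
        OptP (openT 0 (.fvar x) B) (.app M (.con x)) F →
        OptP (.pi A B) M (.all (phiT A) (closeF 0 x (.imp FA F)))
end

inductive OptCtx : Ctx → List HForm → Prop
  | nil : OptCtx [] []
  | kind {Γ Ds u K} : OptCtx Γ Ds → OptCtx ((u, .kind K) :: Γ) Ds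
  | type {Γ Ds x A F} : OptN [] A (.con x) F → OptCtx Γ Ds →
      OptCtx ((x, .type A) :: Γ) (F :: Ds)

/-! ## Miscellaneous -/

/-- Π-prefix construction: mkPi [B1,...,Bn] A = ΠB1....ΠBn. A (de Bruijn). -/
def mkPi (Bs : List LFType) (A : LFType) : LFType := Bs.foldr .pi A

/-- instantiate the de Bruijn variables of the body of an n-ary Π-prefix:
the i-th term replaces index (n-1-i). -/
def instT (ts : List LFObj) (A : LFType) : LFType :=
  (((List.range ts.length).reverse).zip ts).foldl (fun A p => openT p.1 p.2 A) A

/-- environment mapping names to hohh terms. -/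
def envOf (xs : List ℕ) (ts : List HTerm) : ℕ → Option HTerm :=
  fun v => ((xs.zip ts).find? (fun p => p.1 = v)).map Prod.snd

/-- environment mapping names to LF objects. -/
def lfEnvOf (xs : List ℕ) (ts : List LFObj) : ℕ → Option LFObj :=
  fun v => ((xs.zip ts).find? (fun p => p.1 = v)).map Prod.snd

/-! (A' ~ A)σ : equality of types up to σ-instantiated encodings of embedded objects. -/
mutual
  inductive KSim (σ : ℕ → Option HTerm) : LFKind → LFKind → Prop
    | type : KSim σ .type .type
    | pi {A A' K K'} : TSim σ A' A → KSim σ K' K → KSim σ (.pi A' K') (.pi A K)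
  inductive TSim (σ : ℕ → Option HTerm) : LFType → LFType → Prop
    | tvar {u} : TSim σ (.tvar u) (.tvar u)
    | pi {A A' B B'} : TSim σ A' A → TSim σ B' B → TSim σ (.pi A' B') (.pi A B)
    | lam {A A' B B'} : TSim σ A' A → TSim σ B' B → TSim σ (.lam A' B') (.lam A B)
    | app {A A' M M'} : TSim σ A' A → encO M' = hsubstSim σ (encO M) →
        TSim σ (.app A' M') (.app A M)
end

def EVSim (σ : ℕ → Option HTerm) : EVal → EVal → Prop
  | .kind K', .kind K => KSim σ K' K
  | .type A', .type A => TSim σ A' A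
  | _, _ => False

def CtxSim (σ : ℕ → Option HTerm) (Δ' Δ : Ctx) : Prop :=
  List.Forall₂ (fun p q => p.1 = q.1 ∧ EVSim σ p.2 q.2) Δ' Δ

/-! ## Normal-expression LF derivations (for Statement 14) -/

def NormEV : EVal → Prop
  | .kind K => NormK K
  | .type A => NormT A

def NormCtxP (Γ : Ctx) : Prop := ∀ p ∈ Γ, NormEV p.2

def NormJudg : LFJudg → Prop
  | .kind K => NormK K
  | .istype A K => NormT A ∧ NormK K
  | .isobj M A => NormO M ∧ NormT A

/-! LF typing restricted so that every expression in the derivation is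
beta-normal; in abstraction rules the annotation and the Pi-domain coincide. -/
mutual
  inductive WfNCtx : Ctx → Prop
    | nil : WfNCtx []
    | kind {Γ K u} : WfNKind Γ K → WfNCtx Γ → u ∉ ctxNames Γ →
        WfNCtx ((u, .kind K) :: Γ)
    | type {Γ A x} : WfNType Γ A .type → WfNCtx Γ → x ∉ ctxNames Γ →
        WfNCtx ((x, .type A) :: Γ)
  inductive WfNKind : Ctx → LFKind → Prop
    | type {Γ} : WfNCtx Γ → WfNKind Γ .type
    | pi {Γ A K} (x : ℕ) : WfNType Γ A .type →
        x ∉ ctxNames Γ → x ∉ namesK K →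
        WfNKind ((x, .type A) :: Γ) (openK 0 (.fvar x) K) →
        WfNKind Γ (.pi A K)
  inductive WfNType : Ctx → LFType → LFKind → Prop
    | var {Γ u K} : WfNCtx Γ → (u, .kind K) ∈ Γ → NormK K →
        WfNType Γ (.tvar u) K
    | pi {Γ A B} (x : ℕ) : WfNType Γ A .type →
        x ∉ ctxNames Γ → x ∉ namesT B →
        WfNType ((x, .type A) :: Γ) (openT 0 (.fvar x) B) .type →
        WfNType Γ (.pi A B) .type
    | lam {Γ A B K} (x : ℕ) : WfNType Γ A .type → NormT A →
        x ∉ ctxNames Γ → x ∉ namesT B → x ∉ namesK K →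
        WfNType ((x, .type A) :: Γ) (openT 0 (.fvar x) B) (openK 0 (.fvar x) K) →
        WfNType Γ (.lam A B) (.pi A K)
    | app {Γ A B K K' M} : WfNType Γ A (.pi B K) → WfNObj Γ M B →
        KNF (openK 0 M K) K' → WfNType Γ (.app A M) K'
  inductive WfNObj : Ctx → LFObj → LFType → Prop
    | var {Γ x A} : WfNCtx Γ → (x, .type A) ∈ Γ → NormT A →
        WfNObj Γ (.fvar x) A
    | lam {Γ A B M} (x : ℕ) : WfNType Γ A .type → NormT A →
        x ∉ ctxNames Γ → x ∉ namesO M → x ∉ namesT B →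
        WfNObj ((x, .type A) :: Γ) (openO 0 (.fvar x) M) (openT 0 (.fvar x) B) →
        WfNObj Γ (.lam A M) (.pi A B)
    | app {Γ M N A B B'} : WfNObj Γ M (.pi A B) → WfNObj Γ N A →
        TNF (openT 0 N B) B' → WfNObj Γ (.app M N) B'
end

def WfNJudg (Γ : Ctx) : LFJudg → Prop
  | .kind K => WfNKind Γ K
  | .istype A K => WfNType Γ A K
  | .isobj M A => WfNObj Γ M A

/-! The simple translation of a type is related to its optimized translation by a collapse
relation: a typing atom `hastype M ⟨c N⃗⟩` becomes the specialized atom `c M N⃗`, and in clause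
positions some premises become `⊤`. A derivation of the simple sequent is replayed rule by rule
on the optimized side: collapse is stable under the instantiations made by `∀R` and `∀L`, an
atom collapses in only one way, so initial sequents survive, and an `⊃L` on an elided premise is
closed by `⊤R` instead of the original subderivation. The two translations may choose different
names for the bound variable of a Π; the simple one is renamed to the optimized one's choice,
which is harmless because that name is never a predicate head of the optimized formula. -/

def mkSpine (u : ℕ) (args : List HTerm) : HTerm := args.foldl .app (.con u)

theorem mkSpine_append (u : ℕ) (args : List HTerm) (a : HTerm) :
    mkSpine u (args ++ [a]) = .app (mkSpine u args) a := by
  simp [mkSpine, List.foldl_append]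

def unspine : HTerm → Option (ℕ × List HTerm)
  | .con u => some (u, [])
  | .app t a => (unspine t).map fun p => (p.1, p.2 ++ [a])
  | _ => none

theorem unspine_mkSpine (u : ℕ) (args : List HTerm) :
    unspine (mkSpine u args) = some (u, args) := by
  induction args using List.reverseRecOn with
  | nil => rfl
  | append_singleton args a ih => simp [mkSpine_append, unspine, ih]

theorem mkSpine_inj {u v : ℕ} {as bs : List HTerm} :
    mkSpine u as = mkSpine v bs ↔ u = v ∧ as = bs := by
  refine ⟨fun h => by simpa [unspine_mkSpine] using congrArg unspine h, ?_⟩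
  rintro ⟨rfl, rfl⟩
  rfl

theorem hsubst_mkSpine (k : ℕ) (t : HTerm) (u : ℕ) (args : List HTerm) :
    hsubst k t (mkSpine u args) = mkSpine u (args.map (hsubst k t)) := by
  induction args using List.reverseRecOn with
  | nil => rfl
  | append_singleton args a ih => simp [mkSpine_append, hsubst, ih]

theorem closeT_mkSpine {x u : ℕ} (k : ℕ) (hu : u ≠ x) (args : List HTerm) :
    closeT k x (mkSpine u args) = mkSpine u (args.map (closeT k x)) := by
  induction args using List.reverseRecOn with
  | nil => simp [mkSpine, closeT, hu]
  | append_singleton args a ih => simp [mkSpine_append, closeT, ih]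

theorem hsubstCon_of_notMem {x : ℕ} {s t : HTerm} (h : x ∉ hcons t) :
    hsubstCon x s t = t := by
  induction t <;> grind [hcons, hsubstCon]

theorem mem_hcons_hsubstCon {x a : ℕ} {s t : HTerm} (h : a ∈ hcons (hsubstCon x s t)) :
    a ∈ hcons s ∨ a ∈ hcons t := by
  induction t <;> grind [hcons, hsubstCon]

theorem mem_hcons_closeT {x a k : ℕ} {t : HTerm} (h : a ∈ hcons (closeT k x t)) :
    a ∈ hcons t ∧ a ≠ x := by
  induction t generalizing k <;> grind [hcons, closeT]

theorem closeT_eq_closeT_hsubstCon {x y k : ℕ} {t : HTerm} (h : y ∉ hcons t) :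
    closeT k x t = closeT k y (hsubstCon x (.con y) t) := by
  induction t generalizing k <;> grind [hcons, closeT, hsubstCon]

theorem hsubstCon_closeT_comm {x y z k : ℕ} (hzx : z ≠ x) (hzy : z ≠ y) (t : HTerm) :
    hsubstCon x (.con y) (closeT k z t) = closeT k z (hsubstCon x (.con y) t) := by
  induction t generalizing k <;> grind [closeT, hsubstCon]

def hconsF : HForm → List ℕ
  | .top => []
  | .hastype m a => hcons m ++ hcons a
  | .papp _ args => args.flatMap hcons
  | .imp f g => hconsF f ++ hconsF g
  | .all _ f => hconsF f

def predHeads : HForm → List ℕ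
  | .papp u _ => [u]
  | .imp f g => predHeads f ++ predHeads g
  | .all _ f => predHeads f
  | _ => []

def hsubstConF (c : ℕ) (s : HTerm) : HForm → HForm
  | .top => .top
  | .hastype m a => .hastype (hsubstCon c s m) (hsubstCon c s a)
  | .papp u args => .papp u (args.map (hsubstCon c s))
  | .imp f g => .imp (hsubstConF c s f) (hsubstConF c s g)
  | .all τ f => .all τ (hsubstConF c s f)

theorem mem_hconsF_closeF {x a k : ℕ} {F : HForm} (h : a ∈ hconsF (closeF k x F)) :
    a ∈ hconsF F ∧ a ≠ x := by
  induction F generalizing k with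
  | papp u args =>
      simp only [closeF, hconsF, List.mem_flatMap, List.mem_map] at h ⊢
      obtain ⟨_, ⟨t, ht, rfl⟩, hat⟩ := h
      exact ⟨⟨t, ht, (mem_hcons_closeT hat).1⟩, (mem_hcons_closeT hat).2⟩
  | _ => grind [closeF, hconsF, mem_hcons_closeT]

theorem predHeads_closeF (k x : ℕ) (F : HForm) : predHeads (closeF k x F) = predHeads F := by
  induction F generalizing k <;> simp_all [closeF, predHeads]

theorem closeF_eq_closeF_hsubstConF {x y k : ℕ} {F : HForm} (h : y ∉ hconsF F) :
    closeF k x F = closeF k y (hsubstConF x (.con y) F) := by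
  induction F generalizing k with
  | papp u args =>
      simp only [hconsF, List.mem_flatMap, not_exists, not_and] at h
      simp only [closeF, hsubstConF, List.map_map, HForm.papp.injEq, true_and]
      exact List.map_congr_left fun t ht => closeT_eq_closeT_hsubstCon (h t ht)
  | _ => grind [closeF, hsubstConF, hconsF, closeT_eq_closeT_hsubstCon]

theorem hsubstConF_closeF_comm {x y z k : ℕ} (hzx : z ≠ x) (hzy : z ≠ y) (F : HForm) :
    hsubstConF x (.con y) (closeF k z F) = closeF k z (hsubstConF x (.con y) F) := by
  induction F generalizing k <;>
    simp_all [closeF, hsubstConF, hsubstCon_closeT_comm hzx hzy]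

def piSize : LFType → ℕ
  | .pi A B => piSize A + piSize B + 1
  | _ => 0

theorem piSize_openT (k : ℕ) (N : LFObj) : ∀ A : LFType, piSize (openT k N A) = piSize A
  | .pi A B => by simp only [openT, piSize, piSize_openT k N A, piSize_openT (k+1) N B]
  | .tvar _ | .lam _ _ | .app _ _ => rfl

mutual
  theorem namesT_openT (k : ℕ) (N : LFObj) :
      ∀ A : LFType, namesT (openT k N A) ⊆ namesT A ++ namesO N
    | .tvar _ => by simp [openT, namesT]
    | .pi A B | .lam A B => by
        have := namesT_openT k N A; have := namesT_openT (k+1) N B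
        simp only [openT, namesT]; grind
    | .app A M => by
        have := namesT_openT k N A; have := namesO_openO k N M
        simp only [openT, namesT]; grind
  theorem namesO_openO (k : ℕ) (N : LFObj) :
      ∀ M : LFObj, namesO (openO k N M) ⊆ namesO M ++ namesO N
    | .bvar n => by simp only [openO]; split <;> simp [namesO]
    | .fvar _ => by simp [openO, namesO]
    | .lam A M => by
        have := namesT_openT k N A; have := namesO_openO (k+1) N M
        simp only [openO, namesO]; grind
    | .app M M' => by
        have := namesO_openO k N M; have := namesO_openO k N M'
        simp only [openO, namesO]; grind
end

mutual
  theorem namesT_renameT (x y : ℕ) : ∀ A : LFType, namesT (renameT x y A) ⊆ y :: namesT A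
    | .tvar _ => by simp only [renameT, namesT]; grind
    | .pi A B | .lam A B => by
        have := namesT_renameT x y A; have := namesT_renameT x y B
        simp only [renameT, namesT]; grind
    | .app A M => by
        have := namesT_renameT x y A; have := namesO_renameO x y M
        simp only [renameT, namesT]; grind
  theorem namesO_renameO (x y : ℕ) : ∀ M : LFObj, namesO (renameO x y M) ⊆ y :: namesO M
    | .bvar _ => by simp [renameO, namesO]
    | .fvar _ => by simp only [renameO, namesO]; grind
    | .lam A M => by
        have := namesT_renameT x y A; have := namesO_renameO x y M
        simp only [renameO, namesO]; grind
    | .app M M' => by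
        have := namesO_renameO x y M; have := namesO_renameO x y M'
        simp only [renameO, namesO]; grind
end

mutual
  theorem renameT_of_notMem {x : ℕ} (y : ℕ) : ∀ {A : LFType}, x ∉ namesT A → renameT x y A = A
    | .tvar _, h => by grind [renameT, namesT]
    | .pi A B, h | .lam A B, h => by
        simp only [namesT, List.mem_append, not_or] at h
        rw [renameT, renameT_of_notMem y h.1, renameT_of_notMem y h.2]
    | .app A M, h => by
        simp only [namesT, List.mem_append, not_or] at h
        rw [renameT, renameT_of_notMem y h.1, renameO_of_notMem y h.2]
  theorem renameO_of_notMem {x : ℕ} (y : ℕ) : ∀ {M : LFObj}, x ∉ namesO M → renameO x y M = M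
    | .bvar _, _ => rfl
    | .fvar _, h => by grind [renameO, namesO]
    | .lam A M, h => by
        simp only [namesO, List.mem_append, not_or] at h
        rw [renameO, renameT_of_notMem y h.1, renameO_of_notMem y h.2]
    | .app M M', h => by
        simp only [namesO, List.mem_append, not_or] at h
        rw [renameO, renameO_of_notMem y h.1, renameO_of_notMem y h.2]
end

mutual
  theorem renameT_openT (x y k : ℕ) (N : LFObj) :
      ∀ A : LFType, renameT x y (openT k N A) = openT k (renameO x y N) (renameT x y A)
    | .tvar _ => rfl
    | .pi A B | .lam A B => by
        simp only [openT, renameT, renameT_openT x y k N A, renameT_openT x y (k+1) N B]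
    | .app A M => by
        simp only [openT, renameT, renameT_openT x y k N A, renameO_openO x y k N M]
  theorem renameO_openO (x y k : ℕ) (N : LFObj) :
      ∀ M : LFObj, renameO x y (openO k N M) = openO k (renameO x y N) (renameO x y M)
    | .bvar n => by simp only [openO, renameO]; split <;> rfl
    | .fvar _ => by simp [openO, renameO]
    | .lam A M => by
        simp only [openO, renameO, renameT_openT x y k N A, renameO_openO x y (k+1) N M]
    | .app M M' => by
        simp only [openO, renameO, renameO_openO x y k N M, renameO_openO x y k N M']
end

mutual
  def tyVarsT : LFType → List ℕ
    | .tvar u => [u]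
    | .pi A B => tyVarsT A ++ tyVarsT B
    | .lam A B => tyVarsT A ++ tyVarsT B
    | .app A M => tyVarsT A ++ tyVarsO M
  def tyVarsO : LFObj → List ℕ
    | .bvar _ => []
    | .fvar _ => []
    | .lam A M => tyVarsT A ++ tyVarsO M
    | .app M N => tyVarsO M ++ tyVarsO N
end

mutual
  theorem tyVarsT_subset_namesT : ∀ A : LFType, tyVarsT A ⊆ namesT A
    | .tvar _ => by simp [tyVarsT, namesT]
    | .pi A B | .lam A B => by
        have := tyVarsT_subset_namesT A; have := tyVarsT_subset_namesT B
        simp only [tyVarsT, namesT]; grind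
    | .app A M => by
        have := tyVarsT_subset_namesT A; have := tyVarsO_subset_namesO M
        simp only [tyVarsT, namesT]; grind
  theorem tyVarsO_subset_namesO : ∀ M : LFObj, tyVarsO M ⊆ namesO M
    | .bvar _ | .fvar _ => by simp [tyVarsO]
    | .lam A M => by
        have := tyVarsT_subset_namesT A; have := tyVarsO_subset_namesO M
        simp only [tyVarsO, namesO]; grind
    | .app M M' => by
        have := tyVarsO_subset_namesO M; have := tyVarsO_subset_namesO M'
        simp only [tyVarsO, namesO]; grind
end

mutual
  theorem tyVarsT_openT_fvar (k x : ℕ) : ∀ A : LFType, tyVarsT (openT k (.fvar x) A) = tyVarsT A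
    | .tvar _ => rfl
    | .pi A B | .lam A B => by
        simp only [openT, tyVarsT, tyVarsT_openT_fvar k x A, tyVarsT_openT_fvar (k+1) x B]
    | .app A M => by
        simp only [openT, tyVarsT, tyVarsT_openT_fvar k x A, tyVarsO_openO_fvar k x M]
  theorem tyVarsO_openO_fvar (k x : ℕ) : ∀ M : LFObj, tyVarsO (openO k (.fvar x) M) = tyVarsO M
    | .bvar n => by simp only [openO]; split <;> rfl
    | .fvar _ => rfl
    | .lam A M => by
        simp only [openO, tyVarsO, tyVarsT_openT_fvar k x A, tyVarsO_openO_fvar (k+1) x M]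
    | .app M M' => by
        simp only [openO, tyVarsO, tyVarsO_openO_fvar k x M, tyVarsO_openO_fvar k x M']
end

theorem headT_mem_tyVarsT : ∀ {A : LFType}, IsBaseT A → headT A ∈ tyVarsT A
  | .tvar _, _ => by simp [headT, tyVarsT]
  | .app A _, h => List.mem_append_left _ (headT_mem_tyVarsT (A := A) h)

theorem IsBaseT.renameT (x y : ℕ) : ∀ {A : LFType}, IsBaseT A → IsBaseT (LFHH.renameT x y A)
  | .tvar _, _ => trivial
  | .app A _, h => IsBaseT.renameT x y (A := A) h

theorem phiT_renameT (x y : ℕ) : ∀ A : LFType, phiT (renameT x y A) = phiT A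
  | .pi A B => by simp only [renameT, phiT, phiT_renameT x y A, phiT_renameT x y B]
  | .tvar _ | .lam _ _ | .app _ _ => rfl

theorem encO_renameO (x y : ℕ) : ∀ M : LFObj, encO (renameO x y M) = hsubstCon x (.con y) (encO M)
  | .bvar _ => rfl
  | .fvar _ => by grind [encO, renameO, hsubstCon]
  | .lam A M => by simp only [renameO, encO, hsubstCon, phiT_renameT, encO_renameO x y M]
  | .app M N => by simp only [renameO, encO, hsubstCon, encO_renameO x y M, encO_renameO x y N]

theorem encT_renameT (x y : ℕ) : ∀ {A : LFType}, IsBaseT A →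
    encT (renameT x y A) = hsubstCon x (.con y) (encT A)
  | .tvar _, _ => by grind [encT, renameT, hsubstCon]
  | .app A M, h => by
      simp only [renameT, encT, hsubstCon, encT_renameT x y (A := A) h, encO_renameO]

theorem encT_eq_mkSpine : ∀ {A : LFType}, IsBaseT A → encT A = mkSpine (headT A) (argsT A)
  | .tvar _, _ => rfl
  | .app A _, h => by rw [encT, headT, argsT, mkSpine_append, encT_eq_mkSpine (A := A) h]

theorem hcons_encO_subset : ∀ M : LFObj, hcons (encO M) ⊆ namesO M
  | .bvar _ => by simp [encO, hcons]
  | .fvar _ => by simp [encO, hcons, namesO]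
  | .lam A M => by
      have := hcons_encO_subset M
      simp only [encO, hcons, namesO]; grind
  | .app M N => by
      have := hcons_encO_subset M; have := hcons_encO_subset N
      simp only [encO, hcons, namesO]; grind

theorem hcons_encT_subset : ∀ {A : LFType}, IsBaseT A → hcons (encT A) ⊆ namesT A
  | .tvar _, _ => by simp [encT, hcons, namesT]
  | .app A M, h => by
      have := hcons_encT_subset (A := A) h; have := hcons_encO_subset M
      simp only [encT, hcons, namesT]; grind

theorem SimpleT.hconsF_subset {A : LFType} {M : HTerm} {F : HForm} (h : SimpleT A M F) :
    hconsF F ⊆ namesT A ++ hcons M := by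
  induction h with
  | base hb =>
      have hA := hcons_encT_subset hb
      simp only [hconsF]; grind
  | @pi _ B _ _ _ x _ _ _ _ _ ihA ihB =>
      have hBx := namesT_openT 0 (.fvar x) B
      intro a ha
      obtain ⟨ha, hax⟩ := mem_hconsF_closeF ha
      simp only [hconsF, namesT, namesO, hcons] at ha ihA ihB hBx ⊢
      grind

mutual
  theorem SimpleT.rename (x y : ℕ) {A : LFType} {M : HTerm} {F : HForm} (h : SimpleT A M F) :
      SimpleT (renameT x y A) (hsubstCon x (.con y) M) (hsubstConF x (.con y) F) := by
    cases h with
    | base hb =>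
        rw [hsubstConF, ← encT_renameT x y hb]
        exact .base (hb.renameT x y)
    | @pi A₀ B _ FA FB x₀ hx₀A hx₀B hx₀M hFA hFB =>
        obtain ⟨z, hz⟩ : ∃ z, z ∉ x :: y :: (namesT A₀ ++ namesT B ++ hcons M) := by
          simpa using Infinite.exists_notMem_finset
            (x :: y :: (namesT A₀ ++ namesT B ++ hcons M)).toFinset
        simp only [List.mem_cons, List.mem_append, not_or] at hz
        obtain ⟨hzx, hzy, ⟨hzA, hzB⟩, hzM⟩ := hz
        obtain ⟨FA', FB', hFA', hFB', hclose⟩ :=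
          SimpleT.rebind x₀ z hx₀A hx₀B hx₀M hzA hzB hzM hFA hFB
        have hFA'' := hFA'.rename x y
        have hFB'' := hFB'.rename x y
        rw [renameT_openT] at hFB''
        simp only [hsubstCon, renameO, if_neg hzx] at hFA'' hFB''
        rw [hsubstConF, hclose, hsubstConF_closeF_comm hzx hzy, ← phiT_renameT x y A₀]
        refine .pi z ?_ ?_ ?_ hFA'' hFB''
        · exact fun h => by grind [namesT_renameT x y A₀ h]
        · exact fun h => by grind [namesT_renameT x y B h]
        · exact fun h => by grind [mem_hcons_hsubstCon h, hcons]
  -- `rename` at a Π-type calls `rebind` at the same type, which calls `rename` only at its parts.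
  termination_by (piSize A, 1)
  decreasing_by
    all_goals simp only [piSize, piSize_openT]
    exacts [.right _ (by omega), .left _ _ (by omega), .left _ _ (by omega)]

  theorem SimpleT.rebind {A B : LFType} {M : HTerm} {FA FB : HForm} (x x' : ℕ)
      (hxA : x ∉ namesT A) (hxB : x ∉ namesT B) (hxM : x ∉ hcons M)
      (hx'A : x' ∉ namesT A) (hx'B : x' ∉ namesT B) (hx'M : x' ∉ hcons M)
      (hFA : SimpleT A (.con x) FA) (hFB : SimpleT (openT 0 (.fvar x) B) (.app M (.con x)) FB) :
      ∃ FA' FB', SimpleT A (.con x') FA' ∧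
        SimpleT (openT 0 (.fvar x') B) (.app M (.con x')) FB' ∧
        closeF 0 x (.imp FA FB) = closeF 0 x' (.imp FA' FB') := by
    by_cases hxx : x = x'
    · subst hxx
      exact ⟨FA, FB, hFA, hFB, rfl⟩
    have hFA' := hFA.rename x x'
    have hFB' := hFB.rename x x'
    rw [renameT_openT, renameT_of_notMem x' hxA, renameT_of_notMem x' hxB] at *
    simp only [hsubstCon, renameO, if_pos, hsubstCon_of_notMem hxM] at hFA' hFB'
    refine ⟨_, _, hFA', hFB', closeF_eq_closeF_hsubstConF fun h => ?_⟩
    have hA := hFA.hconsF_subset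
    have hB := hFB.hconsF_subset
    have hBx := namesT_openT 0 (.fvar x) B
    simp only [hconsF, hcons, namesO] at h hA hB hBx
    grind
  termination_by (piSize (.pi A B), 0)
  decreasing_by all_goals simp only [piSize, piSize_openT]; exact .left _ _ (by omega)
end

mutual
  theorem OptN.predHeads_subset {gs : List ℕ} {A : LFType} {M : HTerm} {F : HForm} :
      OptN gs A M F → predHeads F ⊆ tyVarsT A
    | .base hb => by simpa [predHeads] using headT_mem_tyVarsT hb
    | .pi_rigid x _ _ _ _ _ hF => fun u hu => by
        have h := hF.predHeads_subset
        simp only [predHeads, predHeads_closeF, tyVarsT_openT_fvar, List.nil_append] at h hu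
        simp [tyVarsT, h hu]
    | .pi_nonrigid x _ _ _ _ _ hFA hF => fun u hu => by
        have hA := hFA.predHeads_subset
        have hB := hF.predHeads_subset
        simp only [predHeads, predHeads_closeF, tyVarsT, tyVarsT_openT_fvar, List.mem_append]
          at hA hB hu ⊢
        exact hu.imp (@hA u) (@hB u)
  theorem OptP.predHeads_subset {A : LFType} {M : HTerm} {F : HForm} :
      OptP A M F → predHeads F ⊆ tyVarsT A
    | .base hb => by simpa [predHeads] using headT_mem_tyVarsT hb
    | .pi x _ _ _ hFA hF => fun u hu => by
        have hA := hFA.predHeads_subset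
        have hB := hF.predHeads_subset
        simp only [predHeads, predHeads_closeF, tyVarsT, tyVarsT_openT_fvar, List.mem_append]
          at hA hB hu ⊢
        exact hu.imp (@hA u) (@hB u)
end

/-- `Collapse true` relates goals and `Collapse false` program clauses: a simple typing atom
`hastype m (c args)` becomes the specialized atom `c m args`, and in clauses a premise may be
replaced by `⊤`. -/
inductive Collapse : Bool → HForm → HForm → Prop
  | atom (b : Bool) (u : ℕ) (m : HTerm) (args : List HTerm) :
      Collapse b (.hastype m (mkSpine u args)) (.papp u (m :: args))
  | imp {b : Bool} {d d' g g' : HForm} :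
      Collapse (!b) d d' → Collapse b g g' → Collapse b (.imp d g) (.imp d' g')
  | imp_top {d d' : HForm} (g : HForm) :
      Collapse false d d' → Collapse false (.imp g d) (.imp .top d')
  | all {b : Bool} {g g' : HForm} (τ : STy) : Collapse b g g' → Collapse b (.all τ g) (.all τ g')

namespace Collapse

theorem substF {b : Bool} {F F' : HForm} (h : Collapse b F F') (k : ℕ) (t : HTerm) :
    Collapse b (LFHH.substF k t F) (LFHH.substF k t F') := by
  induction h generalizing k with
  | atom b u m args =>
      simp only [LFHH.substF, hsubst_mkSpine, List.map_cons]
      exact .atom b u _ _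
  | imp _ _ ihd ihg => exact .imp (ihd k) (ihg k)
  | imp_top g _ ih => exact .imp_top _ (ih k)
  | all τ _ ih => exact .all τ (ih (k+1))

theorem closeF {b : Bool} {F F' : HForm} (h : Collapse b F F') (k : ℕ) {x : ℕ}
    (hx : x ∉ predHeads F') : Collapse b (LFHH.closeF k x F) (LFHH.closeF k x F') := by
  induction h generalizing k with
  | atom b u m args =>
      simp only [predHeads, List.mem_singleton] at hx
      simp only [LFHH.closeF, closeT_mkSpine k (Ne.symm hx), List.map_cons]
      exact .atom b u _ _
  | imp _ _ ihd ihg =>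
      simp only [predHeads, List.mem_append, not_or] at hx
      exact .imp (ihd k hx.1) (ihg k hx.2)
  | imp_top g _ ih =>
      simp only [predHeads, List.nil_append] at hx
      exact .imp_top _ (ih k hx)
  | all τ _ ih => exact .all τ (ih (k+1) hx)

theorem eq_papp_of_isAtom {b : Bool} {a a' : HForm} (h : Collapse b a a') (ha : IsAtom a) :
    ∃ u m args, a = .hastype m (mkSpine u args) ∧ a' = .papp u (m :: args) := by
  cases h with
  | atom b u m args => exact ⟨u, m, args, rfl, rfl⟩
  | _ => simp [IsAtom] at ha

theorem isAtom {b : Bool} {a a' : HForm} (h : Collapse b a a') (ha : IsAtom a) : IsAtom a' := by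
  obtain ⟨u, m, args, rfl, rfl⟩ := h.eq_papp_of_isAtom ha
  trivial

theorem eq_of_isAtom {b b' : Bool} {a a₁ a₂ : HForm} (h₁ : Collapse b a a₁)
    (h₂ : Collapse b' a a₂) (ha : IsAtom a) : a₁ = a₂ := by
  obtain ⟨u, m, args, rfl, rfl⟩ := h₁.eq_papp_of_isAtom ha
  obtain ⟨v, m', args', he, rfl⟩ := h₂.eq_papp_of_isAtom ha
  obtain ⟨rfl, hs⟩ := HForm.hastype.inj he
  obtain ⟨rfl, rfl⟩ := mkSpine_inj.1 hs
  rfl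

end Collapse

theorem notMem_tyVarsT_openT {x : ℕ} {B : LFType} (h : x ∉ namesT B) :
    x ∉ tyVarsT (openT 0 (.fvar x) B) := by
  rw [tyVarsT_openT_fvar]
  exact fun hx => h (tyVarsT_subset_namesT B hx)

theorem notMem_predHeads_imp {x : ℕ} {A B : LFType} {FA FB : HForm}
    (hFA : predHeads FA ⊆ tyVarsT A) (hFB : predHeads FB ⊆ tyVarsT (openT 0 (.fvar x) B))
    (hxA : x ∉ namesT A) (hxB : x ∉ namesT B) : x ∉ predHeads (.imp FA FB) := by
  simp only [predHeads, List.mem_append, not_or]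
  exact ⟨fun h => hxA (tyVarsT_subset_namesT A (hFA h)),
    fun h => notMem_tyVarsT_openT hxB (hFB h)⟩

mutual
  theorem OptP.collapse {A : LFType} {M : HTerm} {F F' : HForm} :
      OptP A M F' → SimpleT A M F → Collapse true F F'
    | .base _, .base hb => by rw [encT_eq_mkSpine hb]; exact .atom _ _ _ _
    | .base hb, .pi .. | .pi .., .base hb => by simp [IsBaseT] at hb
    | .pi x' hx'A hx'B hx'M hFA' hF', .pi x hxA hxB hxM hFA hFB => by
        obtain ⟨_, _, hFA₂, hFB₂, heq⟩ := SimpleT.rebind x x' hxA hxB hxM hx'A hx'B hx'M hFA hFB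
        rw [heq]
        exact .all _ ((Collapse.imp (b := true) (hFA'.collapse hFA₂) (hF'.collapse hFB₂)).closeF 0
          (notMem_predHeads_imp hFA'.predHeads_subset hF'.predHeads_subset hx'A hx'B))
  theorem OptN.collapse {gs : List ℕ} {A : LFType} {M : HTerm} {F F' : HForm} :
      OptN gs A M F' → SimpleT A M F → Collapse false F F'
    | .base _, .base hb => by rw [encT_eq_mkSpine hb]; exact .atom _ _ _ _
    | .base hb, .pi .. | .pi_rigid .., .base hb | .pi_nonrigid .., .base hb => by
        simp [IsBaseT] at hb
    | .pi_rigid x' _ hx'A hx'B hx'M _ hF', .pi x hxA hxB hxM hFA hFB => by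
        obtain ⟨_, _, _, hFB₂, heq⟩ := SimpleT.rebind x x' hxA hxB hxM hx'A hx'B hx'M hFA hFB
        rw [heq]
        exact .all _ (.imp_top _ ((hF'.collapse hFB₂).closeF 0
          fun h => notMem_tyVarsT_openT hx'B (hF'.predHeads_subset h)))
    | .pi_nonrigid x' _ hx'A hx'B hx'M _ hFA' hF', .pi x hxA hxB hxM hFA hFB => by
        obtain ⟨_, _, hFA₂, hFB₂, heq⟩ := SimpleT.rebind x x' hxA hxB hxM hx'A hx'B hx'M hFA hFB
        rw [heq]
        exact .all _ ((Collapse.imp (b := false) (hFA'.collapse hFA₂) (hF'.collapse hFB₂)).closeF 0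
          (notMem_predHeads_imp hFA'.predHeads_subset hF'.predHeads_subset hx'A hx'B))
end

def ProgCollapse (Γ Γ' : List HForm) : Prop := ∀ d ∈ Γ, ∃ d' ∈ Γ', Collapse false d d'

theorem ProgCollapse.cons {d d' : HForm} {Γ Γ' : List HForm} (hd : Collapse false d d')
    (hΓ : ProgCollapse Γ Γ') : ProgCollapse (d :: Γ) (d' :: Γ') := by
  intro e he
  rcases List.mem_cons.1 he with rfl | he
  · exact ⟨d', List.mem_cons_self, hd⟩
  · obtain ⟨e', he', hee'⟩ := hΓ e he
    exact ⟨e', List.mem_cons_of_mem _ he', hee'⟩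

theorem SimpleCtx.progCollapse {Γ : Ctx} {Ds Ds' : List HForm} (h : SimpleCtx Γ Ds)
    (h' : OptCtx Γ Ds') : ProgCollapse Ds Ds' := by
  induction h generalizing Ds' with
  | nil => cases h'; nofun
  | kind _ ih => cases h' with | kind h' => exact ih h'
  | type hF _ ih => cases h' with | type hF' h' => exact (ih h').cons (hF'.collapse hF)

mutual
  theorem Seq.collapse {n : ℕ} {Sg : Sig} {Γ Γ' : List HForm} {g g' : HForm} :
      Seq n Sg Γ g → ProgCollapse Γ Γ' → Collapse true g g' → Seq n Sg Γ' g'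
    | .top, _, hg => nomatch hg
    | .impR h, hΓ, .imp hd hg => .impR (h.collapse (hΓ.cons hd) hg)
    | .allR c hc h, hΓ, .all _ hg => .allR c hc (h.collapse hΓ (hg.substF 0 (.con c)))
    | .decide hmem hat hfoc, hΓ, hg => by
        obtain ⟨d', hd', hdd'⟩ := hΓ _ hmem
        exact .decide hd' (hg.isAtom hat) (hfoc.collapse hΓ hg hat hdd')
  theorem Focus.collapse {n : ℕ} {Sg : Sig} {Γ Γ' : List HForm} {a a' d d' : HForm} :
      Focus n Sg Γ a d → ProgCollapse Γ Γ' → Collapse true a a' → IsAtom a →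
        Collapse false d d' → Focus n Sg Γ' a' d'
    | .init _, _, ha, hat, hd => by
        rw [ha.eq_of_isAtom hd hat]
        exact .init (hd.isAtom hat)
    | .allL t ht h, hΓ, ha, hat, .all _ hd => .allL t ht (h.collapse hΓ ha hat (hd.substF 0 t))
    | .impL hg h, hΓ, ha, hat, .imp hgg' hd =>
        .impL (hg.collapse hΓ hgg') (h.collapse hΓ ha hat hd)
    | .impL _ h, hΓ, ha, hat, .imp_top _ hd => .impL .top (h.collapse hΓ ha hat hd)
end

/-- completeness of the optimized translation relative to the
simple one, for contexts and types in normal form that are not necessarily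
well-formed. -/
theorem optimized_complete_wrt_simple (Γ : Ctx) (A : LFType)
    (hΓn : NormCtxP Γ) (hAn : NormT A)
    (M : HTerm) (Ds Ds' : List HForm) (F F' : HForm)
    (hDs : SimpleCtx Γ Ds) (hF : SimpleT A M F)
    (hDs' : OptCtx Γ Ds') (hF' : OptP A M F')
    (h : SeqD (sigOf Γ) Ds F) :
    SeqD (sigOf Γ) Ds' F' := by
  obtain ⟨n, hn⟩ := h
  exact ⟨n, hn.collapse (hDs.progCollapse hDs') (hF'.collapse hF)⟩

end LFHH
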